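/- Let r ≥ 3 and let H be an r-uniform r-partite linear hypergraph. If H is G_r(3r−3, 3)-free, then H is also G_r(4r−5, 4)-free. -/

import Mathlib

/-!
Three pairwise intersecting edges with three distinct pairwise intersection points span exactly
`3r - 3` vertices, so in a linear `G_r(3r-3, 3)`-free hypergraph any family of at least three pairwise intersecting edges passes through one vertex.
Among four edges one can therefore pick an edge `D` meeting the union of the other three in at most
two vertices: if two of the edges are disjoint, let `D` be one of them (it meets each other edge in
at most one vertex); otherwise all four edges share a vertex `x` and `D` meets the others only
in `x`. The other three edges span at least `3r - 2` vertices, so the four span at least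
`r + (3r - 2) - 2 = 4r - 4`.
-/

open Finset

/-- A hypergraph `H` is `G_r(v,e)`-free if any `e` distinct edges span at least `v+1` vertices. -/
def GFree {V : Type*} [DecidableEq V] (H : Finset (Finset V)) (v e : ℕ) : Prop :=
  ∀ S ⊆ H, S.card = e → v + 1 ≤ (S.biUnion id).card

/-- `extremalF r n v e` is the maximum number of edges of a `G_r(v,e)`-free `r`-uniform
hypergraph on `n` vertices. -/
noncomputable def extremalF (r n v e : ℕ) : ℕ :=
  sSup {m : ℕ | ∃ H : Finset (Finset (Fin n)),
    (∀ A ∈ H, A.card = r) ∧ GFree H v e ∧ H.card = m}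

namespace Finset

variable {α β : Type*}

theorem card_eq_card_of_card_filter_eq_one [Fintype β] [DecidableEq β] {s : Finset α}
    {f : α → β} (h : ∀ b, #(s.filter fun a => f a = b) = 1) : #s = Fintype.card β := by
  rw [card_eq_sum_card_fiberwise (f := f) (t := univ) fun a _ => mem_univ _]
  simp [h]

variable [DecidableEq α]

theorem card_union_union_add_card_inter (A B C : Finset α) :
    #(A ∪ B ∪ C) + #(A ∩ B) + #(A ∩ C) + #(B ∩ C) = #A + #B + #C + #(A ∩ B ∩ C) := by
  have hAB := card_union_add_card_inter A B
  have hABC := card_union_add_card_inter (A ∪ B) C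
  have hC := card_union_add_card_inter (A ∩ C) (B ∩ C)
  rw [union_inter_distrib_right] at hABC
  rw [← inter_inter_distrib_right] at hC
  omega

theorem card_biUnion_add_card_inter_biUnion_erase {S : Finset (Finset α)} {D : Finset α}
    (hD : D ∈ S) :
    #(S.biUnion id) + #(D ∩ (S.erase D).biUnion id) = #D + #((S.erase D).biUnion id) := by
  have hsplit : S.biUnion id = D ∪ (S.erase D).biUnion id := by
    conv_lhs => rw [← insert_erase hD]
    rw [biUnion_insert]
    rfl
  rw [hsplit]
  exact card_union_add_card_inter _ _

end Finset

section LinearHypergraph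

variable {V : Type*} [DecidableEq V] {r : ℕ} {H : Finset (Finset V)}

theorem card_inter_biUnion_le_of_disjoint
    (hlin : (H : Set (Finset V)).Pairwise fun A B => #(A ∩ B) ≤ 1)
    {D X : Finset V} {T : Finset (Finset V)} (hD : D ∈ H) (hT : T ⊆ H) (hDT : D ∉ T)
    (hX : X ∈ T) (hDX : Disjoint D X) :
    #(D ∩ T.biUnion id) ≤ #T - 1 := by
  rw [inter_biUnion]
  calc #(T.biUnion fun Y => D ∩ id Y) ≤ ∑ Y ∈ T, #(D ∩ Y) := card_biUnion_le
    _ = ∑ Y ∈ T.erase X, #(D ∩ Y) :=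
      (sum_erase _ (by rw [disjoint_iff_inter_eq_empty.mp hDX, card_empty])).symm
    _ ≤ #(T.erase X) • 1 := sum_le_card_nsmul _ _ _ fun Y hY =>
      hlin hD (hT (mem_of_mem_erase hY)) fun h => hDT (h ▸ mem_of_mem_erase hY)
    _ = #T - 1 := by rw [card_erase_of_mem hX, smul_eq_mul, mul_one]

theorem card_inter_biUnion_le_one_of_mem
    (hlin : (H : Set (Finset V)).Pairwise fun A B => #(A ∩ B) ≤ 1)
    {D : Finset V} {T : Finset (Finset V)} {x : V} (hD : D ∈ H) (hT : T ⊆ H) (hDT : D ∉ T)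
    (hxD : x ∈ D) (hxT : ∀ Y ∈ T, x ∈ Y) :
    #(D ∩ T.biUnion id) ≤ 1 := by
  have hsub : D ∩ T.biUnion id ⊆ {x} := by
    intro w hw
    obtain ⟨hwD, hwT⟩ := mem_inter.mp hw
    obtain ⟨Y, hY, hwY⟩ := mem_biUnion.mp hwT
    have hDY : D ≠ Y := fun h => hDT (h ▸ hY)
    exact mem_singleton.mpr <| card_le_one.mp (hlin hD (hT hY) hDY) w (mem_inter.mpr ⟨hwD, hwY⟩)
      x (mem_inter.mpr ⟨hxD, hxT Y hY⟩)
  simpa using card_le_card hsub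

variable (hsized : (H : Set (Finset V)).Sized r)
  (hlin : (H : Set (Finset V)).Pairwise fun A B => #(A ∩ B) ≤ 1)
  (hfree : GFree H (3 * r - 3) 3)
include hsized hlin hfree

theorem inter_inter_nonempty_of_gFree {A B C : Finset V} (hA : A ∈ H) (hB : B ∈ H) (hC : C ∈ H)
    (hAB : A ≠ B) (hAC : A ≠ C) (hBC : B ≠ C) (hAB' : (A ∩ B).Nonempty)
    (hAC' : (A ∩ C).Nonempty) (hBC' : (B ∩ C).Nonempty) :
    (A ∩ B ∩ C).Nonempty := by
  have hspan := hfree {A, B, C} (by simp [insert_subset_iff, hA, hB, hC])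
    (card_eq_three.mpr ⟨A, B, C, hAB, hAC, hBC, rfl⟩)
  have hunion : ({A, B, C} : Finset (Finset V)).biUnion id = A ∪ B ∪ C := by
    simp [union_assoc]
  rw [hunion] at hspan
  have hie := card_union_union_add_card_inter A B C
  rw [hsized hA, hsized hB, hsized hC] at hie
  have hAB1 : #(A ∩ B) = 1 := (hlin hA hB hAB).antisymm (card_pos.mpr hAB')
  have hAC1 : #(A ∩ C) = 1 := (hlin hA hC hAC).antisymm (card_pos.mpr hAC')
  have hBC1 : #(B ∩ C) = 1 := (hlin hB hC hBC).antisymm (card_pos.mpr hBC')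
  rw [← card_pos]
  omega

theorem exists_mem_forall_of_pairwise_inter_nonempty {S : Finset (Finset V)} (hS : S ⊆ H)
    (hmeet : (S : Set (Finset V)).Pairwise fun A B => (A ∩ B).Nonempty) (hS3 : 3 ≤ #S) :
    ∃ x, ∀ D ∈ S, x ∈ D := by
  have common {A B C : Finset V} (hA : A ∈ S) (hB : B ∈ S) (hC : C ∈ S) (hAB : A ≠ B)
      (hAC : A ≠ C) (hBC : B ≠ C) : ∃ x, (x ∈ A ∧ x ∈ B) ∧ x ∈ C := by
    simpa only [Finset.Nonempty, mem_inter] using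
      inter_inter_nonempty_of_gFree hsized hlin hfree (hS hA) (hS hB) (hS hC) hAB hAC hBC
        (hmeet hA hB hAB) (hmeet hA hC hAC) (hmeet hB hC hBC)
  obtain ⟨A, hA, B, hB, C, hC, hAB, hAC, hBC⟩ := two_lt_card.mp hS3
  obtain ⟨x, ⟨hxA, hxB⟩, -⟩ := common hA hB hC hAB hAC hBC
  refine ⟨x, fun D hD => ?_⟩
  by_cases hDA : D = A
  · exact hDA ▸ hxA
  by_cases hDB : D = B
  · exact hDB ▸ hxB
  obtain ⟨y, ⟨hyD, hyA⟩, hyB⟩ := common hD hA hB hDA hDB hAB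
  have hyx : y = x := card_le_one.mp (hlin (hS hA) (hS hB) hAB) y (mem_inter.mpr ⟨hyA, hyB⟩)
    x (mem_inter.mpr ⟨hxA, hxB⟩)
  exact hyx ▸ hyD

theorem exists_card_inter_biUnion_erase_le_two {S : Finset (Finset V)} (hS : S ⊆ H)
    (hS4 : #S = 4) : ∃ D ∈ S, #(D ∩ (S.erase D).biUnion id) ≤ 2 := by
  have hrest (D : Finset V) : S.erase D ⊆ H := (erase_subset D S).trans hS
  by_cases hmeet : (S : Set (Finset V)).Pairwise fun A B => (A ∩ B).Nonempty
  · obtain ⟨x, hx⟩ :=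
      exists_mem_forall_of_pairwise_inter_nonempty hsized hlin hfree hS hmeet (by omega)
    obtain ⟨D, hD⟩ := card_pos.mp (by omega : 0 < #S)
    refine ⟨D, hD, (card_inter_biUnion_le_one_of_mem hlin (hS hD) (hrest D) (notMem_erase D S)
      (hx D hD) fun Y hY => hx Y (mem_of_mem_erase hY)).trans (by norm_num)⟩
  · simp only [Set.Pairwise, not_forall, mem_coe, not_nonempty_iff_eq_empty,
      ← disjoint_iff_inter_eq_empty] at hmeet
    obtain ⟨D, hD, X, hX, hDX, hdisj⟩ := hmeet
    refine ⟨D, hD, ?_⟩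
    have := card_inter_biUnion_le_of_disjoint hlin (hS hD) (hrest D) (notMem_erase D S)
      (mem_erase.mpr ⟨Ne.symm hDX, hX⟩) hdisj
    rwa [card_erase_of_mem hD, hS4] at this

theorem gFree_four_of_gFree_three : GFree H (4 * r - 5) 4 := by
  intro S hS hS4
  obtain ⟨D, hD, hsmall⟩ := exists_card_inter_biUnion_erase_le_two hsized hlin hfree hS hS4
  have hrest := hfree (S.erase D) ((erase_subset D S).trans hS)
    (by rw [card_erase_of_mem hD, hS4])
  have hsplit := card_biUnion_add_card_inter_biUnion_erase hD
  have hDr := hsized (hS hD)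
  have hinter_le := card_le_card (inter_subset_left (s₁ := D) (s₂ := (S.erase D).biUnion id))
  omega

end LinearHypergraph

theorem gfree3_implies_gfree4_general {V : Type*} [DecidableEq V] (r : ℕ)
    (H : Finset (Finset V)) (part : V → Fin r)
    (hpart : ∀ A ∈ H, ∀ i : Fin r, (A.filter fun x => part x = i).card = 1)
    (hlin : ∀ A ∈ H, ∀ B ∈ H, A ≠ B → (A ∩ B).card ≤ 1)
    (hfree : GFree H (3 * r - 3) 3) :
    GFree H (4 * r - 5) 4 :=
  gFree_four_of_gFree_three
    (fun A hA => by simpa using card_eq_card_of_card_filter_eq_one (hpart A hA))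
    (fun A hA B hB => hlin A hA B hB) hfree

theorem gfree3_implies_gfree4 {V : Type*} [DecidableEq V] (r : ℕ) (hr : 3 ≤ r)
    (H : Finset (Finset V)) (part : V → Fin r)
    (hpart : ∀ A ∈ H, ∀ i : Fin r, (A.filter fun x => part x = i).card = 1)
    (hlin : ∀ A ∈ H, ∀ B ∈ H, A ≠ B → (A ∩ B).card ≤ 1)
    (hfree : GFree H (3 * r - 3) 3) :
    GFree H (4 * r - 5) 4 :=
  gfree3_implies_gfree4_general r H part hpart hlin hfree
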